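/- Let B(Ω) be a Bergman-type space and, for z ∈ Ω, let U_z f(w) := f(φ_z(w)) k_z(w). Then the following quasi-equalities hold, with implied constants independent of z, w, f: (a) ‖U_z f‖ ≍ ‖f‖ for all f ∈ B(Ω); (b) |U_z² f(w)| ≍ |f(w)| for all f ∈ B(Ω) and all w ∈ Ω; (c) |U_z* k_w(u)| ≍ |k_{φ_z(w)}(u)| for all z, w, u ∈ Ω, where U_z* is the Hilbert-space adjoint of U_z. -/

import Mathlib

open MeasureTheory Filter Topology Set ENNReal

noncomputable section

/-- The ambient space `ℂⁿ`. -/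
abbrev Cn (n : ℕ) := Fin n → ℂ

/-- A Bergman-type space on a domain `Ω ⊆ ℂⁿ`, following Mitkovski--Wick.
The data consists of the domain `Ω`, the involutions `φ_z` (axiom A.1), the
quasi-invariant metric `d` (axiom A.2), the finite measure `σ` together with the
reproducing kernel `K` of the space of holomorphic functions in `L²(σ)` (axiom A.3),
the measure `λ = ‖K_z‖² dσ` (axiom A.4), the kernel quasi-identity (axiom A.5),
the Rudin--Forelli estimates with constant `κ` (axiom A.6), and the blow-up of
`‖K_z‖` at infinity (axiom A.7). -/
structure BergmanTypeSpace (n : ℕ) where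
  Ω : Set (Cn n)
  isOpen_domain : IsOpen Ω
  isConnected_domain : IsConnected Ω
  zero_mem : (0 : Cn n) ∈ Ω
  /- A.1 : involutive holomorphic automorphisms with `φ z 0 = z`. -/
  φ : Cn n → Cn n → Cn n
  φ_mapsTo : ∀ z ∈ Ω, Set.MapsTo (φ z) Ω Ω
  φ_holo : ∀ z ∈ Ω, DifferentiableOn ℂ (φ z) Ω
  φ_invol : ∀ z ∈ Ω, ∀ w ∈ Ω, φ z (φ z w) = w
  φ_zero : ∀ z ∈ Ω, φ z 0 = z
  /- A.2 : a quasi-invariant metric on `Ω`, separable and finitely compact. -/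
  d : Cn n → Cn n → ℝ
  d_nonneg : ∀ z ∈ Ω, ∀ w ∈ Ω, 0 ≤ d z w
  d_eq_zero_iff : ∀ z ∈ Ω, ∀ w ∈ Ω, (d z w = 0 ↔ z = w)
  d_symm : ∀ z ∈ Ω, ∀ w ∈ Ω, d z w = d w z
  d_triangle : ∀ u ∈ Ω, ∀ v ∈ Ω, ∀ w ∈ Ω, d u w ≤ d u v + d v w
  Cd : ℝ
  one_le_Cd : 1 ≤ Cd
  d_quasiInvariant : ∀ z ∈ Ω, ∀ u ∈ Ω, ∀ v ∈ Ω,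
    d (φ z u) (φ z v) ≤ Cd * d u v ∧ d u v ≤ Cd * d (φ z u) (φ z v)
  d_separable : ∃ s : Set (Cn n), s.Countable ∧ s ⊆ Ω ∧
    ∀ z ∈ Ω, ∀ ε : ℝ, 0 < ε → ∃ w ∈ s, d z w < ε
  d_finitelyCompact : ∀ z ∈ Ω, ∀ r : ℝ, ∀ f : ℕ → Cn n,
    (∀ m, f m ∈ Ω ∧ d z (f m) ≤ r) →
    ∃ w, (w ∈ Ω ∧ d z w ≤ r) ∧ ∃ g : ℕ → ℕ, StrictMono g ∧
      Filter.Tendsto (fun m => d w (f (g m))) Filter.atTop (nhds 0)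
  /- A.3 : a finite measure carried by `Ω` for which the holomorphic functions in
  `L²(σ)` form a reproducing kernel Hilbert space with kernel `K`. -/
  σ : Measure (Cn n)
  σ_finite : IsFiniteMeasure σ
  σ_carried : σ Ωᶜ = 0
  K : Cn n → Cn n → ℂ
  K_holo : ∀ z ∈ Ω, DifferentiableOn ℂ (K z) Ω
  K_memL2 : ∀ z ∈ Ω, MemLp (K z) 2 σ
  K_reproducing : ∀ f : Cn n → ℂ, DifferentiableOn ℂ f Ω → MemLp f 2 σ → ∀ z ∈ Ω,
    f z = ∫ w, f w * (starRingEnd ℂ) (K z w) ∂σ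
  Knorm : Cn n → ℝ
  Knorm_def : ∀ z, Knorm z = Real.sqrt (∫ w, ‖K z w‖ ^ 2 ∂σ)
  Knorm_pos : ∀ z ∈ Ω, 0 < Knorm z
  Knorm_continuous : ∀ z ∈ Ω, ∀ ε : ℝ, 0 < ε → ∃ δ : ℝ, 0 < δ ∧
    ∀ w ∈ Ω, d z w < δ → |Knorm w - Knorm z| < ε
  k : Cn n → Cn n → ℂ
  k_def : ∀ z w, k z w = K z w / (Knorm z : ℂ)
  /- A.4 : the measure `λ = ‖K_z‖² dσ` is quasi-invariant and doubling. -/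
  lam : Measure (Cn n)
  lam_def : lam = σ.withDensity (fun z => ENNReal.ofReal (Knorm z ^ 2))
  Clam : ℝ≥0∞
  Clam_lt_top : Clam < ⊤
  lam_quasiInvariant : ∀ z ∈ Ω, ∀ E : Set (Cn n), MeasurableSet E → E ⊆ Ω →
    lam E ≤ Clam * lam (Ω ∩ φ z ⁻¹' E) ∧ lam (Ω ∩ φ z ⁻¹' E) ≤ Clam * lam E
  Cdbl : ℝ≥0∞
  Cdbl_lt_top : Cdbl < ⊤
  lam_doubling : ∀ z ∈ Ω, ∀ r : ℝ, 0 < r →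
    lam {w ∈ Ω | d z w < 2 * r} ≤ Cdbl * lam {w ∈ Ω | d z w < r}
  /- A.5 : `|⟨k_z, k_w⟩| ≃ 1 / ‖K_{φ_z(w)}‖`. -/
  C5 : ℝ
  one_le_C5 : 1 ≤ C5
  kernel_quasi : ∀ z ∈ Ω, ∀ w ∈ Ω,
    ‖∫ u, k z u * (starRingEnd ℂ) (k w u) ∂σ‖ ≤ C5 * (1 / Knorm (φ z w)) ∧
    1 / Knorm (φ z w) ≤ C5 * ‖∫ u, k z u * (starRingEnd ℂ) (k w u) ∂σ‖
  /- A.6 : the Rudin--Forelli estimates, with constant `0 ≤ κ < 2`. -/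
  κ : ℝ
  κ_nonneg : 0 ≤ κ
  κ_lt_two : κ < 2
  rudinForelli :
    (κ = 0 ∧ ∀ r : ℝ, 0 < r → ∃ C : ℝ≥0∞, C < ⊤ ∧ ∀ z ∈ Ω,
      (∫⁻ w, (‖∫ u, K z u * (starRingEnd ℂ) (K w u) ∂σ‖₊ : ℝ≥0∞) ^ r /
        ((ENNReal.ofReal (Knorm z)) ^ r * (ENNReal.ofReal (Knorm w)) ^ r) ∂lam) ≤ C) ∨
    (0 < κ ∧ ∀ r s : ℝ, κ < r → 0 < s → s < κ → ∃ C : ℝ≥0∞, C < ⊤ ∧ ∀ z ∈ Ω,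
      (∫⁻ w, (‖∫ u, K z u * (starRingEnd ℂ) (K w u) ∂σ‖₊ : ℝ≥0∞) ^ ((r + s) / 2) /
        ((ENNReal.ofReal (Knorm z)) ^ s * (ENNReal.ofReal (Knorm w)) ^ r) ∂lam) ≤ C)
  /- A.7 : `‖K_z‖ → ∞` as `d(z,0) → ∞`. -/
  Knorm_atInfty : ∀ M : ℝ, ∃ R : ℝ, ∀ z ∈ Ω, R < d z 0 → M < Knorm z

namespace BergmanTypeSpace

variable {n : ℕ}

/-- Membership in the Bergman-type space `B(Ω)`: holomorphic on `Ω` and in `L²(σ)`. -/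
def memB (S : BergmanTypeSpace n) (f : Cn n → ℂ) : Prop :=
  DifferentiableOn ℂ f S.Ω ∧ MemLp f 2 S.σ

/-- The `L²(Ω; dσ)` inner product. -/
def inn (S : BergmanTypeSpace n) (f g : Cn n → ℂ) : ℂ :=
  ∫ w, f w * (starRingEnd ℂ) (g w) ∂S.σ

/-- The `L²(Ω; dσ)` norm. -/
def nrm (S : BergmanTypeSpace n) (f : Cn n → ℂ) : ℝ :=
  Real.sqrt (∫ w, ‖f w‖ ^ 2 ∂S.σ)

/-- The orthogonal projection `P f(z) = ∫ ⟨K_w, K_z⟩ f(w) dσ(w)`. -/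
def P (S : BergmanTypeSpace n) (f : Cn n → ℂ) : Cn n → ℂ :=
  fun z => ∫ w, (S.inn (S.K w) (S.K z)) * f w ∂S.σ

/-- The Toeplitz operator `T_u = P M_u`. -/
def toeplitz (S : BergmanTypeSpace n) (u : Cn n → ℂ) (f : Cn n → ℂ) : Cn n → ℂ :=
  S.P (fun w => u w * f w)

/-- The Hankel operator `H_u = (I - P) M_u`. -/
def hankel (S : BergmanTypeSpace n) (u : Cn n → ℂ) (f : Cn n → ℂ) : Cn n → ℂ :=
  fun w => u w * f w - S.P (fun x => u x * f x) w

/-- The adapted translation `U_z f(w) = f(φ_z(w)) k_z(w)`. -/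
def U (S : BergmanTypeSpace n) (z : Cn n) (f : Cn n → ℂ) : Cn n → ℂ :=
  fun w => f (S.φ z w) * S.k z w

/-- The filter of points of `Ω` with `d(z,0) → ∞`. -/
def toInfty (S : BergmanTypeSpace n) : Filter (Cn n) :=
  (Filter.atTop.comap (fun z => S.d z 0)) ⊓ Filter.principal S.Ω

/-- `Tad` is an adjoint of `T` as an operator on `B(Ω)`. -/
def IsAdjointPair (S : BergmanTypeSpace n) (T Tad : (Cn n → ℂ) → (Cn n → ℂ)) : Prop :=
  Set.MapsTo Tad {f | S.memB f} {f | S.memB f} ∧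
  ∀ f g, S.memB f → S.memB g → S.inn (T f) g = S.inn f (Tad g)

/-- Compactness of an operator on `B(Ω)`: the image of any sequence in the unit ball
has a Cauchy (in `L²(σ)`) subsequence. -/
def IsCompactOp (S : BergmanTypeSpace n) (T : (Cn n → ℂ) → (Cn n → ℂ)) : Prop :=
  Set.MapsTo T {f | S.memB f} {f | S.memB f} ∧
  ∀ f : ℕ → (Cn n → ℂ), (∀ m, S.memB (f m) ∧ S.nrm (f m) ≤ 1) →
    ∃ g : ℕ → ℕ, StrictMono g ∧ ∀ ε : ℝ, 0 < ε → ∃ N : ℕ, ∀ p ≥ N, ∀ q ≥ N,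
      S.nrm (fun w => T (f (g p)) w - T (f (g q)) w) < ε

/-- The operator norm (of an operator defined on `B(Ω)`, with values in `L²(σ)`). -/
def opNorm (S : BergmanTypeSpace n) (T : (Cn n → ℂ) → (Cn n → ℂ)) : ℝ :=
  sInf {C : ℝ | 0 ≤ C ∧ ∀ f, S.memB f → S.nrm (T f) ≤ C * S.nrm f}

/-- The essential norm `‖T‖ₑ = inf {‖T - A‖ : A compact}`. -/
def essNorm (S : BergmanTypeSpace n) (T : (Cn n → ℂ) → (Cn n → ℂ)) : ℝ :=
  sInf {c : ℝ | ∃ A, S.IsCompactOp A ∧ c = S.opNorm (fun f => fun w => T f w - A f w)}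

/-- A strong Bergman-type space: equalities in axioms A.2, A.4 and A.5. -/
def IsStrong (S : BergmanTypeSpace n) : Prop :=
  (∀ z ∈ S.Ω, ∀ u ∈ S.Ω, ∀ v ∈ S.Ω, S.d (S.φ z u) (S.φ z v) = S.d u v) ∧
  (∀ z ∈ S.Ω, ∀ E : Set (Cn n), MeasurableSet E → E ⊆ S.Ω →
    S.lam (S.Ω ∩ S.φ z ⁻¹' E) = S.lam E) ∧
  (∀ z ∈ S.Ω, ∀ w ∈ S.Ω, ‖S.inn (S.k z) (S.k w)‖ = 1 / S.Knorm (S.φ z w))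

/-- A product `T_{u₁} T_{u₂} ⋯ T_{uₖ}` of Toeplitz operators. -/
def toeplitzProd (S : BergmanTypeSpace n) : List (Cn n → ℂ) → ((Cn n → ℂ) → (Cn n → ℂ))
  | [] => id
  | u :: us => fun f => S.toeplitz u (S.toeplitzProd us f)

/-- Symbols in `L∞(Ω)` (bounded measurable on `Ω`). -/
def IsBoundedSymbol (S : BergmanTypeSpace n) (u : Cn n → ℂ) : Prop :=
  Measurable u ∧ ∃ M : ℝ, ∀ w ∈ S.Ω, ‖u w‖ ≤ M

/-- Symbols in `BUC(Ω,d)`: bounded and `d`-uniformly continuous on `Ω`. -/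
def IsBUCSymbol (S : BergmanTypeSpace n) (u : Cn n → ℂ) : Prop :=
  S.IsBoundedSymbol u ∧
  ∀ ε : ℝ, 0 < ε → ∃ δ : ℝ, 0 < δ ∧ ∀ z ∈ S.Ω, ∀ w ∈ S.Ω, S.d z w < δ → ‖u z - u w‖ < ε

/-- A finite sum of finite products of Toeplitz operators whose symbols all satisfy `Q`. -/
def IsToeplitzPolynomial (S : BergmanTypeSpace n) (Q : (Cn n → ℂ) → Prop)
    (A : (Cn n → ℂ) → (Cn n → ℂ)) : Prop :=
  ∃ (L : ℕ) (us : Fin L → List (Cn n → ℂ)),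
    (∀ l, ∀ u ∈ us l, Q u) ∧ ∀ f x, A f x = ∑ l, S.toeplitzProd (us l) f x

/-- Membership in the norm closure of the finite sums of finite products of Toeplitz
operators with symbols satisfying `Q` (e.g. the Toeplitz algebra `𝒯_{L^∞}`). -/
def InToeplitzAlgebra (S : BergmanTypeSpace n) (Q : (Cn n → ℂ) → Prop)
    (T : (Cn n → ℂ) → (Cn n → ℂ)) : Prop :=
  Set.MapsTo T {f | S.memB f} {f | S.memB f} ∧
  ∀ ε : ℝ, 0 < ε → ∃ A, S.IsToeplitzPolynomial Q A ∧
    ∀ f, S.memB f → S.nrm (fun x => T f x - A f x) ≤ ε * S.nrm f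

end BergmanTypeSpace

/-! Passing from `σ` to `λ = ‖K‖² σ`, which is quasi-invariant under `φ_z`, shows that
`x ↦ φ_z x` changes `σ`-integrals only up to constants and the weight
`‖K_x‖² / ‖K_{φ_z x}‖²`. Axiom A.5 is equivalent to `|k_z(x)| ≍ ‖K_x‖ / ‖K_{φ_z x}‖`, so this
weight is `|k_z(x)|²` up to constants, which gives (a). Applying A.5 at `w` and at `φ_z w`
gives `|k_z(φ_z w)| |k_z(w)| ≍ 1`, which is (b) because `U_z² f = f · (k_z ∘ φ_z) · k_z`.
For (c), the reproducing property gives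
`conj (U_z* k_w (u)) = ⟨U_z K_u, k_w⟩ = K_u(φ_z w) k_z(w) / ‖K_w‖`, and A.5 turns the factor
`‖K_{φ_z w}‖ |k_z(w)| / ‖K_w‖` into a quantity `≍ 1`. -/

theorem ContinuousOn.lowerSemicontinuous_indicator {X : Type*} [TopologicalSpace X]
    {s : Set X} {F : X → ℝ≥0∞} (hF : ContinuousOn F s) (hs : IsOpen s) :
    LowerSemicontinuous (s.indicator F) := by
  refine lowerSemicontinuous_iff_isOpen_preimage.2 fun y => ?_
  have hpre : s.indicator F ⁻¹' Ioi y = s ∩ F ⁻¹' Ioi y := by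
    ext x
    by_cases hx : x ∈ s <;> simp [hx]
  rw [hpre]
  exact hF.isOpen_inter_preimage hs isOpen_Ioi

section QuasiInvariantMap

variable {X : Type*} [MeasurableSpace X] {μ : Measure X} {s : Set X} {ψ : X → X} {C : ℝ≥0∞}

theorem map_restrict_apply_eq (hs : MeasurableSet s) (hψ : AEMeasurable ψ (μ.restrict s))
    {E : Set X} (hE : MeasurableSet E) : (μ.restrict s).map ψ E = μ (ψ ⁻¹' E ∩ s) := by
  rw [Measure.map_apply_of_aemeasurable hψ hE, Measure.restrict_apply' hs]

theorem lintegral_comp_le_of_measure_preimage_le (hs : MeasurableSet s)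
    (hψ : AEMeasurable ψ (μ.restrict s)) (hmaps : MapsTo ψ s s)
    (hC : ∀ E, MeasurableSet E → E ⊆ s → μ (s ∩ ψ ⁻¹' E) ≤ C * μ E)
    {G : X → ℝ≥0∞} (hG : AEMeasurable G (μ.restrict s)) :
    ∫⁻ x in s, G (ψ x) ∂μ ≤ C * ∫⁻ x in s, G x ∂μ := by
  have hmap : (μ.restrict s).map ψ ≤ C • μ.restrict s := by
    refine Measure.le_iff.2 fun E hE => ?_
    have hpre : ψ ⁻¹' E ∩ s = s ∩ ψ ⁻¹' (E ∩ s) :=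
      Set.ext fun x => ⟨fun ⟨hxE, hxs⟩ => ⟨hxs, hxE, hmaps hxs⟩, fun ⟨hxs, hxE, _⟩ => ⟨hxE, hxs⟩⟩
    rw [map_restrict_apply_eq hs hψ hE, hpre, Measure.smul_apply, smul_eq_mul,
      Measure.restrict_apply' hs]
    exact hC _ (hE.inter hs) inter_subset_right
  calc ∫⁻ x in s, G (ψ x) ∂μ = ∫⁻ x, G x ∂(μ.restrict s).map ψ :=
        (lintegral_map' ((hG.smul_measure C).mono_measure hmap) hψ).symm
    _ ≤ ∫⁻ x, G x ∂(C • μ.restrict s) := lintegral_mono' hmap le_rfl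
    _ = C * ∫⁻ x in s, G x ∂μ := lintegral_smul_measure _ _

theorem lintegral_le_of_le_measure_preimage (hs : MeasurableSet s)
    (hψ : AEMeasurable ψ (μ.restrict s))
    (hC : ∀ E, MeasurableSet E → E ⊆ s → μ E ≤ C * μ (s ∩ ψ ⁻¹' E)) (G : X → ℝ≥0∞) :
    ∫⁻ x in s, G x ∂μ ≤ C * ∫⁻ x in s, G (ψ x) ∂μ := by
  have hmap : μ.restrict s ≤ C • (μ.restrict s).map ψ := by
    refine Measure.le_iff.2 fun E hE => ?_
    rw [Measure.smul_apply, smul_eq_mul, map_restrict_apply_eq hs hψ hE,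
      Measure.restrict_apply' hs]
    exact (hC _ (hE.inter hs) inter_subset_right).trans
      (mul_le_mul_right (measure_mono (show s ∩ ψ ⁻¹' (E ∩ s) ⊆ ψ ⁻¹' E ∩ s from
        fun _ hx => ⟨hx.2.1, hx.1⟩)) C)
  calc ∫⁻ x in s, G x ∂μ ≤ ∫⁻ x, G x ∂(C • (μ.restrict s).map ψ) := lintegral_mono' hmap le_rfl
    _ = C * ∫⁻ x, G x ∂(μ.restrict s).map ψ := lintegral_smul_measure _ _
    _ ≤ C * ∫⁻ x in s, G (ψ x) ∂μ := mul_le_mul_right (lintegral_map_le _ _) C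

end QuasiInvariantMap

theorem sqrt_toReal_le_sqrt_mul_sqrt_of_le_mul {a b M : ℝ≥0∞} (h : a ≤ M * b) (hM : M ≠ ⊤)
    (hb : b ≠ ⊤) : √a.toReal ≤ √M.toReal * √b.toReal := by
  rw [← Real.sqrt_mul ENNReal.toReal_nonneg, ← ENNReal.toReal_mul]
  exact Real.sqrt_le_sqrt (ENNReal.toReal_mono (ENNReal.mul_ne_top hM hb) h)

theorem memLp_two_iff_lintegral_enorm_sq_lt_top {α E : Type*} [MeasurableSpace α]
    {μ : Measure α} [NormedAddCommGroup E] {g : α → E} (hg : AEStronglyMeasurable g μ) :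
    MemLp g 2 μ ↔ ∫⁻ x, ‖g x‖ₑ ^ 2 ∂μ < ⊤ := by
  have key : eLpNorm g 2 μ < ⊤ ↔ ∫⁻ x, ‖g x‖ₑ ^ 2 ∂μ < ⊤ := by
    simpa only [toReal_ofNat, ENNReal.rpow_two] using
      eLpNorm_lt_top_iff_lintegral_rpow_enorm_lt_top (μ := μ) (f := g) two_ne_zero ofNat_ne_top
  exact ⟨fun h => key.1 h.2, fun h => ⟨hg, key.2 h⟩⟩

namespace BergmanTypeSpace

variable {n : ℕ} (S : BergmanTypeSpace n)

theorem measurableSet_Ω : MeasurableSet S.Ω := S.isOpen_domain.measurableSet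

theorem restrict_Ω : S.σ.restrict S.Ω = S.σ :=
  Measure.restrict_eq_self_of_ae_mem (ae_iff.2 S.σ_carried)

theorem aestronglyMeasurable_of_continuousOn {g : Cn n → ℂ} (hg : ContinuousOn g S.Ω) :
    AEStronglyMeasurable g S.σ := by
  rw [← S.restrict_Ω]
  exact hg.aestronglyMeasurable S.measurableSet_Ω

theorem nrm_eq_sqrt_lintegral {g : Cn n → ℂ} (hg : AEStronglyMeasurable g S.σ) :
    S.nrm g = √((∫⁻ x, ‖g x‖ₑ ^ 2 ∂S.σ).toReal) := by
  rw [nrm, integral_eq_lintegral_of_nonneg_ae (ae_of_all _ fun x => sq_nonneg _)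
    (hg.norm.pow 2)]
  simp only [ENNReal.ofReal_pow (norm_nonneg _), ofReal_norm]

variable {S}

theorem apply_eq_inn_K {f : Cn n → ℂ} (hf : S.memB f) {z : Cn n} (hz : z ∈ S.Ω) :
    f z = S.inn f (S.K z) :=
  S.K_reproducing f hf.1 hf.2 z hz

theorem inn_conj_symm (f g : Cn n → ℂ) : S.inn f g = starRingEnd ℂ (S.inn g f) := by
  rw [inn, inn, ← integral_conj]
  simp only [map_mul, Complex.conj_conj, mul_comm]

theorem memB_K {z : Cn n} (hz : z ∈ S.Ω) : S.memB (S.K z) :=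
  ⟨S.K_holo z hz, S.K_memL2 z hz⟩

theorem K_apply_eq_inn {z w : Cn n} (hz : z ∈ S.Ω) (hw : w ∈ S.Ω) :
    S.K z w = S.inn (S.K z) (S.K w) :=
  apply_eq_inn_K (memB_K hz) hw

theorem norm_K_comm {z w : Cn n} (hz : z ∈ S.Ω) (hw : w ∈ S.Ω) : ‖S.K z w‖ = ‖S.K w z‖ := by
  rw [K_apply_eq_inn hz hw, inn_conj_symm, Complex.norm_conj, ← K_apply_eq_inn hw hz]

theorem Knorm_sq (z : Cn n) : S.Knorm z ^ 2 = ∫ w, ‖S.K z w‖ ^ 2 ∂S.σ := by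
  rw [S.Knorm_def]
  exact Real.sq_sqrt (integral_nonneg fun w => by positivity)

theorem K_apply_self {z : Cn n} (hz : z ∈ S.Ω) : S.K z z = ((S.Knorm z ^ 2 : ℝ) : ℂ) := by
  rw [K_apply_eq_inn hz hz, inn, Knorm_sq, ← integral_complex_ofReal]
  simp only [Complex.mul_conj, Complex.normSq_eq_norm_sq, Complex.ofReal_pow]

theorem k_eq_inv_mul (z : Cn n) : S.k z = fun w => (S.Knorm z : ℂ)⁻¹ * S.K z w :=
  funext fun w => by rw [S.k_def, div_eq_inv_mul]

theorem memB_k {z : Cn n} (hz : z ∈ S.Ω) : S.memB (S.k z) := by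
  rw [k_eq_inv_mul]
  exact ⟨(S.K_holo z hz).const_mul _, (S.K_memL2 z hz).const_mul _⟩

theorem norm_k_apply {z : Cn n} (hz : z ∈ S.Ω) (w : Cn n) :
    ‖S.k z w‖ = ‖S.K z w‖ / S.Knorm z := by
  rw [S.k_def, norm_div, Complex.norm_real, Real.norm_of_nonneg (S.Knorm_pos z hz).le]

theorem inn_k_left (z : Cn n) (g : Cn n → ℂ) :
    S.inn (S.k z) g = S.inn (S.K z) g / (S.Knorm z : ℂ) := by
  rw [inn, inn, ← integral_div]
  simp only [S.k_def, div_mul_eq_mul_div]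

theorem inn_k_right (f : Cn n → ℂ) (w : Cn n) :
    S.inn f (S.k w) = S.inn f (S.K w) / (S.Knorm w : ℂ) := by
  rw [inn, inn, ← integral_div]
  simp only [S.k_def, map_div₀, Complex.conj_ofReal, mul_div_assoc]

theorem norm_inn_k_k {z w : Cn n} (hz : z ∈ S.Ω) (hw : w ∈ S.Ω) :
    ‖S.inn (S.k z) (S.k w)‖ = ‖S.k z w‖ / S.Knorm w := by
  rw [inn_k_right, inn_k_left, ← K_apply_eq_inn hz hw, norm_k_apply hz, norm_div,
    Complex.norm_real, Real.norm_of_nonneg (S.Knorm_pos w hw).le, ← S.k_def, norm_k_apply hz]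


theorem norm_k_le {z x : Cn n} (hz : z ∈ S.Ω) (hx : x ∈ S.Ω) :
    ‖S.k z x‖ ≤ S.C5 * (S.Knorm x / S.Knorm (S.φ z x)) := by
  have h := (S.kernel_quasi z hz x hx).1
  rw [← inn, norm_inn_k_k hz hx, div_le_iff₀ (S.Knorm_pos x hx)] at h
  exact h.trans_eq (by ring)

theorem Knorm_div_le {z x : Cn n} (hz : z ∈ S.Ω) (hx : x ∈ S.Ω) :
    S.Knorm x / S.Knorm (S.φ z x) ≤ S.C5 * ‖S.k z x‖ := by
  have h := (S.kernel_quasi z hz x hx).2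
  rw [← inn, norm_inn_k_k hz hx] at h
  have hNx := S.Knorm_pos x hx
  calc S.Knorm x / S.Knorm (S.φ z x) = 1 / S.Knorm (S.φ z x) * S.Knorm x := by ring
    _ ≤ S.C5 * (‖S.k z x‖ / S.Knorm x) * S.Knorm x := by gcongr
    _ = S.C5 * ‖S.k z x‖ := by field_simp

theorem norm_apply_le_nrm_mul_Knorm {g : Cn n → ℂ} (hg : S.memB g) {v : Cn n} (hv : v ∈ S.Ω) :
    ‖g v‖ ≤ S.nrm g * S.Knorm v := by
  have hL2 : ENNReal.ofReal 2 = 2 := by norm_num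
  have holder := integral_mul_norm_le_Lp_mul_Lq (μ := S.σ) Real.HolderConjugate.two_two
    (hL2 ▸ hg.2) (hL2 ▸ S.K_memL2 v hv)
  simp only [Real.rpow_two, ← Real.sqrt_eq_rpow, ← S.Knorm_def] at holder
  calc ‖g v‖ = ‖∫ u, g u * starRingEnd ℂ (S.K v u) ∂S.σ‖ := by rw [apply_eq_inn_K hg hv, inn]
    _ ≤ ∫ u, ‖g u‖ * ‖S.K v u‖ ∂S.σ := by
        refine (norm_integral_le_integral_norm _).trans_eq ?_
        simp only [norm_mul, Complex.norm_conj]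
    _ ≤ S.nrm g * S.Knorm v := holder

theorem nrm_k {z : Cn n} (hz : z ∈ S.Ω) : S.nrm (S.k z) = 1 := by
  simp only [nrm, norm_k_apply hz, div_pow, integral_div, ← Knorm_sq,
    div_self (pow_pos (S.Knorm_pos z hz) 2).ne', Real.sqrt_one]

variable (S) in
/-- `Knorm` need not be measurable. This supremum of `|g|²` over the unit ball of `B(Ω)` is
lower semicontinuous and equals `Knorm ^ 2` on `Ω` (the supremum is attained at `k_v`). -/
def KnormSq (v : Cn n) : ℝ≥0∞ :=
  ⨆ g : {g : Cn n → ℂ // S.memB g ∧ S.nrm g ≤ 1}, S.Ω.indicator (fun x => ‖g.1 x‖ₑ ^ 2) v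

theorem measurable_KnormSq : Measurable S.KnormSq := by
  refine (lowerSemicontinuous_iSup fun g => ?_).measurable
  exact ((ENNReal.continuous_pow 2).comp_continuousOn g.2.1.1.continuousOn.enorm
    ).lowerSemicontinuous_indicator S.isOpen_domain

theorem KnormSq_eq {v : Cn n} (hv : v ∈ S.Ω) : S.KnormSq v = ENNReal.ofReal (S.Knorm v ^ 2) := by
  have hNv := S.Knorm_pos v hv
  refine le_antisymm (iSup_le fun ⟨g, hgB, hg1⟩ => ?_) ?_
  · rw [indicator_of_mem hv, ← ofReal_norm, ← ENNReal.ofReal_pow (norm_nonneg _)]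
    have hgv := (norm_apply_le_nrm_mul_Knorm hgB hv).trans (mul_le_of_le_one_left hNv.le hg1)
    exact ENNReal.ofReal_le_ofReal (pow_le_pow_left₀ (norm_nonneg _) hgv 2)
  · have hkv : ‖S.k v v‖ = S.Knorm v := by
      rw [norm_k_apply hv, K_apply_self hv, Complex.norm_real, Real.norm_of_nonneg (by positivity)]
      field_simp
    refine le_iSup_of_le ⟨S.k v, memB_k hv, (nrm_k hv).le⟩ ?_
    rw [indicator_of_mem hv, ← ofReal_norm, hkv, ENNReal.ofReal_pow hNv.le]

theorem lam_eq_withDensity : S.lam = S.σ.withDensity S.KnormSq := by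
  rw [S.lam_def]
  refine withDensity_congr_ae ?_
  filter_upwards [ae_iff.2 S.σ_carried] with v hv using (KnormSq_eq hv).symm

theorem setLIntegral_lam (H : Cn n → ℝ≥0∞) :
    ∫⁻ x in S.Ω, H x ∂S.lam = ∫⁻ x in S.Ω, S.KnormSq x * H x ∂S.σ := by
  rw [lam_eq_withDensity, restrict_withDensity S.measurableSet_Ω,
    lintegral_withDensity_eq_lintegral_mul_non_measurable _ measurable_KnormSq]
  · rfl
  · filter_upwards [ae_restrict_mem S.measurableSet_Ω] with x hx
    rw [KnormSq_eq hx]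
    exact ofReal_lt_top

variable {z : Cn n}

theorem aemeasurable_φ (hz : z ∈ S.Ω) (μ : Measure (Cn n)) :
    AEMeasurable (S.φ z) (μ.restrict S.Ω) :=
  (S.φ_holo z hz).continuousOn.aemeasurable S.measurableSet_Ω

theorem setLIntegral_lam_div_KnormSq (F : Cn n → ℝ≥0∞) :
    ∫⁻ x in S.Ω, F x / S.KnormSq x ∂S.lam = ∫⁻ x in S.Ω, F x ∂S.σ := by
  rw [setLIntegral_lam]
  refine setLIntegral_congr_fun S.measurableSet_Ω fun x hx => ?_
  rw [KnormSq_eq hx]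
  exact ENNReal.mul_div_cancel (by simp [(S.Knorm_pos x hx).ne']) ofReal_ne_top

theorem setLIntegral_lam_comp_div_KnormSq (F : Cn n → ℝ≥0∞) :
    ∫⁻ x in S.Ω, F (S.φ z x) / S.KnormSq (S.φ z x) ∂S.lam =
      ∫⁻ x in S.Ω, F (S.φ z x) * (S.KnormSq x / S.KnormSq (S.φ z x)) ∂S.σ := by
  rw [setLIntegral_lam]
  simp only [div_eq_mul_inv, mul_left_comm]

theorem setLIntegral_comp_φ_mul_le (hz : z ∈ S.Ω) {F : Cn n → ℝ≥0∞}
    (hF : AEMeasurable F (S.lam.restrict S.Ω)) :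
    ∫⁻ x in S.Ω, F (S.φ z x) * (S.KnormSq x / S.KnormSq (S.φ z x)) ∂S.σ ≤
      S.Clam * ∫⁻ x in S.Ω, F x ∂S.σ := by
  rw [← setLIntegral_lam_comp_div_KnormSq, ← setLIntegral_lam_div_KnormSq]
  exact lintegral_comp_le_of_measure_preimage_le S.measurableSet_Ω (aemeasurable_φ hz _)
    (S.φ_mapsTo z hz) (fun E hE hEΩ => (S.lam_quasiInvariant z hz E hE hEΩ).2)
    (hF.div measurable_KnormSq.aemeasurable)

theorem setLIntegral_le_comp_φ_mul (hz : z ∈ S.Ω) (F : Cn n → ℝ≥0∞) :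
    ∫⁻ x in S.Ω, F x ∂S.σ ≤
      S.Clam * ∫⁻ x in S.Ω, F (S.φ z x) * (S.KnormSq x / S.KnormSq (S.φ z x)) ∂S.σ := by
  rw [← setLIntegral_lam_comp_div_KnormSq, ← setLIntegral_lam_div_KnormSq]
  exact lintegral_le_of_le_measure_preimage S.measurableSet_Ω (aemeasurable_φ hz _)
    (fun E hE hEΩ => (S.lam_quasiInvariant z hz E hE hEΩ).1) (fun x => F x / S.KnormSq x)

theorem KnormSq_div_KnormSq_φ {x : Cn n} (hz : z ∈ S.Ω) (hx : x ∈ S.Ω) :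
    S.KnormSq x / S.KnormSq (S.φ z x) = ENNReal.ofReal ((S.Knorm x / S.Knorm (S.φ z x)) ^ 2) := by
  have hφx := S.φ_mapsTo z hz hx
  rw [KnormSq_eq hx, KnormSq_eq hφx, ← ENNReal.ofReal_div_of_pos (pow_pos (S.Knorm_pos _ hφx) 2),
    div_pow]

theorem enorm_k_sq_le {x : Cn n} (hz : z ∈ S.Ω) (hx : x ∈ S.Ω) :
    ‖S.k z x‖ₑ ^ 2 ≤ ENNReal.ofReal (S.C5 ^ 2) * (S.KnormSq x / S.KnormSq (S.φ z x)) := by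
  rw [KnormSq_div_KnormSq_φ hz hx, ← ENNReal.ofReal_mul (sq_nonneg _), ← mul_pow, ← ofReal_norm,
    ← ENNReal.ofReal_pow (norm_nonneg _)]
  gcongr
  exact norm_k_le hz hx

theorem KnormSq_div_le {x : Cn n} (hz : z ∈ S.Ω) (hx : x ∈ S.Ω) :
    S.KnormSq x / S.KnormSq (S.φ z x) ≤ ENNReal.ofReal (S.C5 ^ 2) * ‖S.k z x‖ₑ ^ 2 := by
  rw [KnormSq_div_KnormSq_φ hz hx, ← ofReal_norm, ← ENNReal.ofReal_pow (norm_nonneg _),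
    ← ENNReal.ofReal_mul (sq_nonneg _), ← mul_pow]
  have hNφx := S.Knorm_pos _ (S.φ_mapsTo z hz hx)
  have hNx := S.Knorm_pos x hx
  gcongr
  exact Knorm_div_le hz hx

theorem enorm_U_apply_sq (f : Cn n → ℂ) (x : Cn n) :
    ‖S.U z f x‖ₑ ^ 2 = ‖f (S.φ z x)‖ₑ ^ 2 * ‖S.k z x‖ₑ ^ 2 := by
  rw [U, enorm_mul, mul_pow]

theorem lintegral_enorm_U_sq_le (hz : z ∈ S.Ω) {f : Cn n → ℂ} (hf : ContinuousOn f S.Ω) :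
    ∫⁻ x, ‖S.U z f x‖ₑ ^ 2 ∂S.σ ≤
      ENNReal.ofReal (S.C5 ^ 2) * S.Clam * ∫⁻ x, ‖f x‖ₑ ^ 2 ∂S.σ := by
  rw [← S.restrict_Ω]
  calc ∫⁻ x in S.Ω, ‖S.U z f x‖ₑ ^ 2 ∂S.σ
      ≤ ∫⁻ x in S.Ω, ENNReal.ofReal (S.C5 ^ 2) *
          (‖f (S.φ z x)‖ₑ ^ 2 * (S.KnormSq x / S.KnormSq (S.φ z x))) ∂S.σ := by
        refine setLIntegral_mono' S.measurableSet_Ω fun x hx => ?_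
        rw [enorm_U_apply_sq, mul_left_comm]
        gcongr
        exact enorm_k_sq_le hz hx
    _ = ENNReal.ofReal (S.C5 ^ 2) *
          ∫⁻ x in S.Ω, ‖f (S.φ z x)‖ₑ ^ 2 * (S.KnormSq x / S.KnormSq (S.φ z x)) ∂S.σ :=
        lintegral_const_mul' _ _ ofReal_ne_top
    _ ≤ ENNReal.ofReal (S.C5 ^ 2) * (S.Clam * ∫⁻ x in S.Ω, ‖f x‖ₑ ^ 2 ∂S.σ) := by
        gcongr
        exact setLIntegral_comp_φ_mul_le hz
          ((hf.aemeasurable S.measurableSet_Ω).enorm.pow_const 2)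
    _ = _ := (mul_assoc _ _ _).symm

theorem lintegral_enorm_sq_le_U (hz : z ∈ S.Ω) (f : Cn n → ℂ) :
    ∫⁻ x, ‖f x‖ₑ ^ 2 ∂S.σ ≤
      ENNReal.ofReal (S.C5 ^ 2) * S.Clam * ∫⁻ x, ‖S.U z f x‖ₑ ^ 2 ∂S.σ := by
  rw [← S.restrict_Ω]
  calc ∫⁻ x in S.Ω, ‖f x‖ₑ ^ 2 ∂S.σ
      ≤ S.Clam * ∫⁻ x in S.Ω,
          ‖f (S.φ z x)‖ₑ ^ 2 * (S.KnormSq x / S.KnormSq (S.φ z x)) ∂S.σ :=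
        setLIntegral_le_comp_φ_mul hz _
    _ ≤ S.Clam * ∫⁻ x in S.Ω, ENNReal.ofReal (S.C5 ^ 2) * ‖S.U z f x‖ₑ ^ 2 ∂S.σ := by
        gcongr S.Clam * ?_
        refine setLIntegral_mono' S.measurableSet_Ω fun x hx => ?_
        rw [enorm_U_apply_sq, mul_left_comm]
        gcongr
        exact KnormSq_div_le hz hx
    _ = _ := by rw [lintegral_const_mul' _ _ ofReal_ne_top]; ring

theorem memB_U (hz : z ∈ S.Ω) {f : Cn n → ℂ} (hf : S.memB f) : S.memB (S.U z f) := by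
  have hdiff : DifferentiableOn ℂ (S.U z f) S.Ω := by
    refine (hf.1.comp (S.φ_holo z hz) (S.φ_mapsTo z hz)).mul ?_
    rw [k_eq_inv_mul]
    exact (S.K_holo z hz).const_mul _
  refine ⟨hdiff, (memLp_two_iff_lintegral_enorm_sq_lt_top
    (S.aestronglyMeasurable_of_continuousOn hdiff.continuousOn)).2 ?_⟩
  exact (lintegral_enorm_U_sq_le hz hf.1.continuousOn).trans_lt (mul_lt_top
    (mul_lt_top ofReal_lt_top S.Clam_lt_top)
    ((memLp_two_iff_lintegral_enorm_sq_lt_top hf.2.1).1 hf.2))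

variable (S) in
theorem exists_nrm_U_le : ∃ c > 0, ∀ z ∈ S.Ω, ∀ f, S.memB f →
    S.nrm (S.U z f) ≤ c * S.nrm f ∧ S.nrm f ≤ c * S.nrm (S.U z f) := by
  set M := ENNReal.ofReal (S.C5 ^ 2) * S.Clam
  have hM : M ≠ ⊤ := (mul_lt_top ofReal_lt_top S.Clam_lt_top).ne
  have hle : ∀ t, √M.toReal * √t ≤ (√M.toReal + 1) * √t := fun t =>
    mul_le_mul_of_nonneg_right (le_add_of_nonneg_right zero_le_one) (Real.sqrt_nonneg _)
  refine ⟨√M.toReal + 1, by positivity, fun z hz f hf => ?_⟩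
  have hU := memB_U hz hf
  have hfin : ∀ g, S.memB g → ∫⁻ x, ‖g x‖ₑ ^ 2 ∂S.σ ≠ ⊤ := fun g hg =>
    ((memLp_two_iff_lintegral_enorm_sq_lt_top hg.2.1).1 hg.2).ne
  rw [S.nrm_eq_sqrt_lintegral hU.2.1, S.nrm_eq_sqrt_lintegral hf.2.1]
  constructor
  · exact (sqrt_toReal_le_sqrt_mul_sqrt_of_le_mul (lintegral_enorm_U_sq_le hz hf.1.continuousOn)
      hM (hfin f hf)).trans (hle _)
  · exact (sqrt_toReal_le_sqrt_mul_sqrt_of_le_mul (lintegral_enorm_sq_le_U hz f)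
      hM (hfin _ hU)).trans (hle _)

theorem U_U_apply {w : Cn n} (hz : z ∈ S.Ω) (hw : w ∈ S.Ω) (f : Cn n → ℂ) :
    S.U z (S.U z f) w = f w * (S.k z (S.φ z w) * S.k z w) := by
  simp only [U, S.φ_invol z hz w hw]
  ring

theorem norm_k_φ_mul_norm_k_le {w : Cn n} (hz : z ∈ S.Ω) (hw : w ∈ S.Ω) :
    ‖S.k z (S.φ z w)‖ * ‖S.k z w‖ ≤ S.C5 ^ 2 := by
  have hφw := S.φ_mapsTo z hz hw
  have h₁ := norm_k_le hz hφw
  rw [S.φ_invol z hz w hw] at h₁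
  have hNw := (S.Knorm_pos w hw).ne'
  have hNφw := (S.Knorm_pos _ hφw).ne'
  calc ‖S.k z (S.φ z w)‖ * ‖S.k z w‖
      ≤ S.C5 * (S.Knorm (S.φ z w) / S.Knorm w) * (S.C5 * (S.Knorm w / S.Knorm (S.φ z w))) :=
        mul_le_mul h₁ (norm_k_le hz hw) (norm_nonneg _) ((norm_nonneg _).trans h₁)
    _ = S.C5 ^ 2 := by field_simp

theorem one_le_norm_k_φ_mul_norm_k {w : Cn n} (hz : z ∈ S.Ω) (hw : w ∈ S.Ω) :
    1 ≤ S.C5 ^ 2 * (‖S.k z (S.φ z w)‖ * ‖S.k z w‖) := by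
  have hφw := S.φ_mapsTo z hz hw
  have h₁ := Knorm_div_le hz hφw
  rw [S.φ_invol z hz w hw] at h₁
  have hNw := S.Knorm_pos w hw
  have hNφw := S.Knorm_pos _ hφw
  calc (1 : ℝ) = S.Knorm (S.φ z w) / S.Knorm w * (S.Knorm w / S.Knorm (S.φ z w)) := by
        field_simp
    _ ≤ S.C5 * ‖S.k z (S.φ z w)‖ * (S.C5 * ‖S.k z w‖) :=
        mul_le_mul h₁ (Knorm_div_le hz hw) (by positivity) ((div_nonneg hNφw.le hNw.le).trans h₁)
    _ = S.C5 ^ 2 * (‖S.k z (S.φ z w)‖ * ‖S.k z w‖) := by ring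

theorem norm_U_U_apply_le {w : Cn n} (hz : z ∈ S.Ω) (hw : w ∈ S.Ω) (f : Cn n → ℂ) :
    ‖S.U z (S.U z f) w‖ ≤ S.C5 ^ 2 * ‖f w‖ ∧ ‖f w‖ ≤ S.C5 ^ 2 * ‖S.U z (S.U z f) w‖ := by
  rw [U_U_apply hz hw, norm_mul, norm_mul]
  constructor
  · rw [mul_comm (S.C5 ^ 2)]
    exact mul_le_mul_of_nonneg_left (norm_k_φ_mul_norm_k_le hz hw) (norm_nonneg _)
  · calc ‖f w‖ = ‖f w‖ * 1 := (mul_one _).symm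
      _ ≤ ‖f w‖ * (S.C5 ^ 2 * (‖S.k z (S.φ z w)‖ * ‖S.k z w‖)) :=
        mul_le_mul_of_nonneg_left (one_le_norm_k_φ_mul_norm_k hz hw) (norm_nonneg _)
      _ = _ := by ring

theorem norm_adjoint_k_apply (hz : z ∈ S.Ω) {V : (Cn n → ℂ) → (Cn n → ℂ)}
    (hV : S.IsAdjointPair (S.U z) V) {w u : Cn n} (hw : w ∈ S.Ω) (hu : u ∈ S.Ω) :
    ‖V (S.k w) u‖ = ‖S.k (S.φ z w) u‖ * (S.Knorm (S.φ z w) * ‖S.k z w‖ / S.Knorm w) := by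
  have hφw := S.φ_mapsTo z hz hw
  have hconj : starRingEnd ℂ (V (S.k w) u) = S.U z (S.K u) w / (S.Knorm w : ℂ) := by
    rw [apply_eq_inn_K (hV.1 (memB_k hw)) hu, ← inn_conj_symm,
      ← hV.2 _ _ (memB_K hu) (memB_k hw), inn_k_right,
      ← apply_eq_inn_K (memB_U hz (memB_K hu)) hw]
  have hNφw := (S.Knorm_pos _ hφw).ne'
  rw [← Complex.norm_conj, hconj, norm_div, Complex.norm_real,
    Real.norm_of_nonneg (S.Knorm_pos w hw).le, U, norm_mul, norm_K_comm hu hφw, norm_k_apply hφw]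
  field_simp

theorem norm_adjoint_k_apply_le (hz : z ∈ S.Ω) {V : (Cn n → ℂ) → (Cn n → ℂ)}
    (hV : S.IsAdjointPair (S.U z) V) {w u : Cn n} (hw : w ∈ S.Ω) (hu : u ∈ S.Ω) :
    ‖V (S.k w) u‖ ≤ S.C5 * ‖S.k (S.φ z w) u‖ ∧ ‖S.k (S.φ z w) u‖ ≤ S.C5 * ‖V (S.k w) u‖ := by
  have hNw := S.Knorm_pos w hw
  have hNφw := S.Knorm_pos _ (S.φ_mapsTo z hz hw)
  have hupper : S.Knorm (S.φ z w) * ‖S.k z w‖ / S.Knorm w ≤ S.C5 := by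
    rw [div_le_iff₀ hNw]
    calc S.Knorm (S.φ z w) * ‖S.k z w‖
        ≤ S.Knorm (S.φ z w) * (S.C5 * (S.Knorm w / S.Knorm (S.φ z w))) := by
          gcongr; exact norm_k_le hz hw
      _ = S.C5 * S.Knorm w := by field_simp
  have hlower : 1 ≤ S.C5 * (S.Knorm (S.φ z w) * ‖S.k z w‖ / S.Knorm w) :=
    calc (1 : ℝ) = S.Knorm (S.φ z w) / S.Knorm w * (S.Knorm w / S.Knorm (S.φ z w)) := by
          field_simp
      _ ≤ S.Knorm (S.φ z w) / S.Knorm w * (S.C5 * ‖S.k z w‖) := by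
          gcongr; exact Knorm_div_le hz hw
      _ = S.C5 * (S.Knorm (S.φ z w) * ‖S.k z w‖ / S.Knorm w) := by ring
  rw [norm_adjoint_k_apply hz hV hw hu]
  constructor
  · rw [mul_comm S.C5]
    exact mul_le_mul_of_nonneg_left hupper (norm_nonneg _)
  · calc ‖S.k (S.φ z w) u‖ = ‖S.k (S.φ z w) u‖ * 1 := (mul_one _).symm
      _ ≤ ‖S.k (S.φ z w) u‖ * (S.C5 * (S.Knorm (S.φ z w) * ‖S.k z w‖ / S.Knorm w)) :=
        mul_le_mul_of_nonneg_left hlower (norm_nonneg _)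
      _ = _ := by ring

end BergmanTypeSpace

/-- the quasi-equalities for the translation operators `U_z`:
(a) `‖U_z f‖ ≍ ‖f‖`; (b) `|U_z² f| ≍ |f|`; (c) `|U_z* k_w| ≍ |k_{φ_z(w)}|`,
with constants independent of `z, w, u, f`. -/
theorem statement3 (n : ℕ) (S : BergmanTypeSpace n) :
    (∃ c₁ c₂ : ℝ, 0 < c₁ ∧ 0 < c₂ ∧ ∀ z ∈ S.Ω, ∀ f : Cn n → ℂ, S.memB f →
      S.nrm (S.U z f) ≤ c₁ * S.nrm f ∧ S.nrm f ≤ c₂ * S.nrm (S.U z f)) ∧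
    (∃ c₁ c₂ : ℝ, 0 < c₁ ∧ 0 < c₂ ∧ ∀ z ∈ S.Ω, ∀ f : Cn n → ℂ, S.memB f → ∀ w ∈ S.Ω,
      ‖S.U z (S.U z f) w‖ ≤ c₁ * ‖f w‖ ∧ ‖f w‖ ≤ c₂ * ‖S.U z (S.U z f) w‖) ∧
    (∃ c₁ c₂ : ℝ, 0 < c₁ ∧ 0 < c₂ ∧ ∀ z ∈ S.Ω,
      ∀ V : (Cn n → ℂ) → (Cn n → ℂ), S.IsAdjointPair (S.U z) V →
        ∀ w ∈ S.Ω, ∀ u ∈ S.Ω,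
          ‖V (S.k w) u‖ ≤ c₁ * ‖S.k (S.φ z w) u‖ ∧
          ‖S.k (S.φ z w) u‖ ≤ c₂ * ‖V (S.k w) u‖) := by
  have hC5 : 0 < S.C5 := one_pos.trans_le S.one_le_C5
  obtain ⟨c, hc, hU⟩ := S.exists_nrm_U_le
  exact ⟨⟨c, c, hc, hc, hU⟩,
    ⟨S.C5 ^ 2, S.C5 ^ 2, by positivity, by positivity,
      fun z hz f _ w hw => S.norm_U_U_apply_le hz hw f⟩,
    ⟨S.C5, S.C5, hC5, hC5, fun z hz V hV w hw u hu => S.norm_adjoint_k_apply_le hz hV hw hu⟩⟩
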